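/- arXiv:1507.05333 — 2 statements merged into one kernel-verified Lean document; each statement's English description precedes it below -/
import Mathlib

section
/- Existence of surrogate distributions with invariant full conditionals: let P^1,...,P^D, P^T be distributions of (X_{S*}, X_N, Y) with densities p^k, such that the conditional density p^k(y | x_{S*}) is the same for all k (invariance assumption A1 with the test task). Then there exist distributions Q^1,...,Q^D,Q^T with densities q^k and a single function q such that for all k: (i) q^k(x_{S*}, y) = p^k(x_{S*}, y) (the marginal over (X_{S*}, Y) is preserved), and (ii) q^k(y | x_{S*}, x_N) = q(y | x_{S*}, x_N) (the full conditional is task-independent). -/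
open MeasureTheory ProbabilityTheory

/-!
Keep the `(x_S, y)`-marginal `m^k` of each task and attach to it a fixed, task-independent
positive probability density `f` on the nuisance coordinates (a standard Gaussian),
`q^k(x_S, x_N, y) = f(x_N) m^k(x_S, y)`.
Integrating out `x_N` returns `m^k`, and in the full conditional `q^k(y | x_S, x_N)` the factor
`f(x_N)` cancels, leaving `m^k(y | x_S)`, which is task-independent by (A1).
-/

theorem integral_prod_gaussianPDFReal_eq_one {ι : Type*} [Fintype ι] (μ : ℝ) {v : NNReal}
    (hv : v ≠ 0) : ∫ x : ι → ℝ, ∏ i, gaussianPDFReal μ v (x i) = 1 := by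
  rw [volume_pi, integral_fintype_prod_eq_prod (fun _ => gaussianPDFReal μ v)]
  simp [integral_gaussianPDFReal_eq_one μ hv]

section

variable {α β γ : Type*} [MeasurableSpace α] [MeasurableSpace β] [MeasurableSpace γ]
  {μ : Measure α} {ν : Measure β} {ρ : Measure γ}

theorem integral_integral_integral_swap_inner [SFinite μ] [SFinite ν] [SFinite ρ]
    {g : α → β → γ → ℝ}
    (hg : Integrable (fun z : α × β × γ => g z.1 z.2.1 z.2.2) (μ.prod (ν.prod ρ))) :
    ∫ x, ∫ y, ∫ z, g x y z ∂ρ ∂ν ∂μ = ∫ x, ∫ z, ∫ y, g x y z ∂ν ∂ρ ∂μ :=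
  integral_congr_ae <| hg.prod_right_ae.mono fun _ hx => integral_integral_swap hx

theorem integral_integral_integral_mul_left (f : β → ℝ) (m : α → γ → ℝ) :
    ∫ x, ∫ y, ∫ z, f y * m x z ∂ρ ∂ν ∂μ = (∫ y, f y ∂ν) * ∫ x, ∫ z, m x z ∂ρ ∂μ := by
  simp only [integral_const_mul, integral_mul_const]

end

theorem stmt_3_general
    {a b D : ℕ}
    (p : Fin (D + 1) → (Fin a → ℝ) → (Fin b → ℝ) → ℝ → ℝ)
    (hpos : ∀ k xS xN y, 0 < p k xS xN y)
    (hintgr : ∀ k, Integrable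
      (fun z : (Fin a → ℝ) × (Fin b → ℝ) × ℝ => p k z.1 z.2.1 z.2.2))
    (hone : ∀ k, ∫ xS, ∫ xN, ∫ y, p k xS xN y = 1)
    -- (A1) with the test task: the conditional density of y given x_S is task-independent
    (hinv : ∀ k k' xS y,
        (∫ xN, p k xS xN y) / (∫ y', ∫ xN, p k xS xN y') =
        (∫ xN, p k' xS xN y) / (∫ y', ∫ xN, p k' xS xN y')) :
    ∃ (q : Fin (D + 1) → (Fin a → ℝ) → (Fin b → ℝ) → ℝ → ℝ)
      (qc : (Fin a → ℝ) → (Fin b → ℝ) → ℝ → ℝ),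
      (∀ k xS xN y, 0 ≤ q k xS xN y) ∧
      (∀ k, ∫ xS, ∫ xN, ∫ y, q k xS xN y = 1) ∧
      -- (i) the marginal over (x_S, y) is preserved
      (∀ k xS y, ∫ xN, q k xS xN y = ∫ xN, p k xS xN y) ∧
      -- (ii) the full conditional of y given (x_S, x_N) is task-independent
      (∀ k xS xN y, q k xS xN y / (∫ y', q k xS xN y') = qc xS xN y) := by
  set f : (Fin b → ℝ) → ℝ := fun xN => ∏ i, gaussianPDFReal 0 1 (xN i)
  have hf_pos : ∀ xN, 0 < f xN := fun xN =>
    Finset.prod_pos fun i _ => gaussianPDFReal_pos 0 1 (xN i) one_ne_zero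
  have hf_one : ∫ xN, f xN = 1 := integral_prod_gaussianPDFReal_eq_one 0 one_ne_zero
  set m := fun k xS y => ∫ xN, p k xS xN y
  refine ⟨fun k xS xN y => f xN * m k xS y, fun xS xN y => m 0 xS y / ∫ y', m 0 xS y',
    ?_, ?_, ?_, ?_⟩
  · intro k xS xN y
    exact mul_nonneg (hf_pos xN).le (integral_nonneg fun xN' => (hpos k xS xN' y).le)
  · intro k
    rw [integral_integral_integral_mul_left, hf_one, one_mul, ← hone k]
    exact (integral_integral_integral_swap_inner (hintgr k)).symm
  · intro k xS y
    rw [integral_mul_const, hf_one, one_mul]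
  · intro k xS xN y
    rw [integral_const_mul, mul_div_mul_left _ _ (hf_pos xN).ne']
    exact hinv k 0 xS y

/-- Existence of surrogate distributions with invariant full conditionals: given task densities
`p^1, …, p^{D+1}` (the last one being the test task) over `(x_S, x_N, y)` whose conditionals
`p^k(y | x_S)` agree across tasks, there are probability densities `q^k` and a single function
`qc` such that the `(x_S, y)`-marginal of `q^k` equals that of `p^k` and the full conditional
`q^k(y | x_S, x_N)` equals `qc` for every task. -/
theorem stmt_3
    {a b D : ℕ}
    (p : Fin (D + 1) → (Fin a → ℝ) → (Fin b → ℝ) → ℝ → ℝ)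
    (hmeas : ∀ k, Measurable
      (fun z : (Fin a → ℝ) × (Fin b → ℝ) × ℝ => p k z.1 z.2.1 z.2.2))
    (hpos : ∀ k xS xN y, 0 < p k xS xN y)
    (hintgr : ∀ k, Integrable
      (fun z : (Fin a → ℝ) × (Fin b → ℝ) × ℝ => p k z.1 z.2.1 z.2.2))
    (hone : ∀ k, ∫ xS, ∫ xN, ∫ y, p k xS xN y = 1)
    -- (A1) with the test task: the conditional density of y given x_S is task-independent
    (hinv : ∀ k k' xS y,
        (∫ xN, p k xS xN y) / (∫ y', ∫ xN, p k xS xN y') =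
        (∫ xN, p k' xS xN y) / (∫ y', ∫ xN, p k' xS xN y')) :
    ∃ (q : Fin (D + 1) → (Fin a → ℝ) → (Fin b → ℝ) → ℝ → ℝ)
      (qc : (Fin a → ℝ) → (Fin b → ℝ) → ℝ → ℝ),
      (∀ k xS xN y, 0 ≤ q k xS xN y) ∧
      (∀ k, ∫ xS, ∫ xN, ∫ y, q k xS xN y = 1) ∧
      -- (i) the marginal over (x_S, y) is preserved
      (∀ k xS y, ∫ xN, q k xS xN y = ∫ xN, p k xS xN y) ∧
      -- (ii) the full conditional of y given (x_S, x_N) is task-independent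
      (∀ k xS xN y, q k xS xN y / (∫ y', q k xS xN y') = qc xS xN y) :=
  stmt_3_general p hpos hintgr hone hinv
end

section
/- In the three-node model with pooled least-squares coefficients beta^{CS} = (beta_S^{CS}, beta_Z^{CS}) computed from D training tasks with coefficients gamma^1,...,gamma^D, if the test coefficient gamma^T has mean zero and variance Sigma^2 > 0, then the expected test error satisfies E_{gamma^T}[E_{P^T}((Y - (beta^{CS})^t X)^2)] >= sigma^2, with sigma^2 being the test error of the invariant predictor (alpha, 0). Equivalently, E_{gamma^T}[risk(beta^{CS})] - sigma^2 = (beta_Z^{CS})^2 (V_Y Sigma^2 + sigma_eta^2) + (gbar^2/D^2)(beta_Z^{CS})^2 alpha^t diag(sigma_X^2) alpha >= 0. -/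
/-!
The pooled coefficient on `X_S` is the multiple `1 - k` of `α`, with `k = ḡ/D · β_Z`, so at test
coefficient `t` the residual `Y - β_Sᵗ X_S - β_Z Z` equals
`(k - β_Z t) αᵗ X_S + (1 - β_Z t) ε - β_Z η`, a linear combination of independent centred
variables. Its mean square is therefore
`(k - β_Z t)² αᵗ diag(σ_X²) α + (1 - β_Z t)² σ² + β_Z² σ_η²`, a quadratic polynomial in `t`.
Averaging over `γ^T` removes the linear term and replaces `t²` by `Σ²`, which leaves `σ²` plus
a sum of nonnegative terms.
-/

open MeasureTheory ProbabilityTheory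
open scoped NNReal

section
variable {Ω ι : Type*} {mΩ : MeasurableSpace Ω} {P : Measure Ω} [IsFiniteMeasure P] [Fintype ι]

lemma integral_sq_sum_const_mul_of_pairwise_indepFun {X : ι → Ω → ℝ}
    (hL2 : ∀ i, MemLp (X i) 2 P) (hcent : ∀ i, P[X i] = 0)
    (hind : Pairwise fun i j => X i ⟂ᵢ[P] X j) (c : ι → ℝ) :
    ∫ ω, (∑ i, c i * X i ω) ^ 2 ∂P = ∑ i, c i ^ 2 * Var[X i; P] := by
  have hL2c : ∀ i, MemLp (fun ω => c i * X i ω) 2 P := fun i => (hL2 i).const_mul (c i)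
  have hcent_sum : P[fun ω => ∑ i, c i * X i ω] = 0 := by
    rw [integral_finsetSum _ fun i _ => (hL2c i).integrable one_le_two]
    simp [integral_const_mul, hcent]
  calc ∫ ω, (∑ i, c i * X i ω) ^ 2 ∂P = Var[∑ i, fun ω => c i * X i ω; P] := by
        rw [variance_of_integral_eq_zero]
        · simp [Finset.sum_apply]
        · exact (Finset.aemeasurable_sum _ fun i _ => (hL2c i).aemeasurable)
        · simpa [Finset.sum_apply] using hcent_sum
    _ = ∑ i, Var[fun ω => c i * X i ω; P] :=
        IndepFun.variance_sum (fun i _ => hL2c i) fun i _ j _ hij =>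
          (hind hij).comp (measurable_const_mul (c i)) (measurable_const_mul (c j))
    _ = ∑ i, c i ^ 2 * Var[X i; P] := by simp only [variance_const_mul]

variable {X : Ω → ι → ℝ} {eps eta : Ω → ℝ}

lemma integral_sq_linear_of_iIndepFun
    (hX : ∀ i, MemLp (fun ω => X ω i) 2 P) (heps : MemLp eps 2 P) (heta : MemLp eta 2 P)
    (hX0 : ∀ i, P[fun ω => X ω i] = 0) (heps0 : P[eps] = 0) (heta0 : P[eta] = 0)
    (hind : iIndepFun (Sum.elim (fun i ω => X ω i)
      (fun b ω => if b then eps ω else eta ω) : ι ⊕ Bool → Ω → ℝ) P)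
    (a : ι → ℝ) (b c : ℝ) :
    ∫ ω, (∑ i, a i * X ω i + b * eps ω + c * eta ω) ^ 2 ∂P
      = ∑ i, a i ^ 2 * Var[fun ω => X ω i; P] + b ^ 2 * Var[eps; P] + c ^ 2 * Var[eta; P] := by
  have key := integral_sq_sum_const_mul_of_pairwise_indepFun (P := P)
    (X := Sum.elim (fun i ω => X ω i) (fun b ω => if b then eps ω else eta ω))
    (by rintro (i | _ | _) <;> simp [*]) (by rintro (i | _ | _) <;> simp [*])
    (fun _ _ h => hind.indepFun h) (Sum.elim a fun b' => if b' then b else c)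
  simp only [Fintype.sum_sum_type, Fintype.sum_bool, Sum.elim_inl, Sum.elim_inr, if_true,
    Bool.false_eq_true, if_false] at key
  simpa only [add_assoc] using key

lemma integral_sq_residual_eq {Y : Ω → ℝ} {α : ι → ℝ}
    (hX : ∀ i, MemLp (fun ω => X ω i) 2 P) (heps : MemLp eps 2 P) (heta : MemLp eta 2 P)
    (hX0 : ∀ i, P[fun ω => X ω i] = 0) (heps0 : P[eps] = 0) (heta0 : P[eta] = 0)
    (hind : iIndepFun (Sum.elim (fun i ω => X ω i)
      (fun b ω => if b then eps ω else eta ω) : ι ⊕ Bool → Ω → ℝ) P)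
    (hY : Y = fun ω => ∑ i, α i * X ω i + eps ω) (k bZ t : ℝ) :
    ∫ ω, (Y ω - ∑ i, (1 - k) * α i * X ω i - bZ * (t * Y ω + eta ω)) ^ 2 ∂P
      = (k - bZ * t) ^ 2 * ∑ i, α i ^ 2 * Var[fun ω => X ω i; P]
        + (1 - bZ * t) ^ 2 * Var[eps; P] + bZ ^ 2 * Var[eta; P] := by
  have hres : ∀ ω, Y ω - ∑ i, (1 - k) * α i * X ω i - bZ * (t * Y ω + eta ω)
      = ∑ i, ((k - bZ * t) * α i) * X ω i + (1 - bZ * t) * eps ω + (-bZ) * eta ω := by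
    intro ω
    have hpull : ∀ c, ∑ i, c * α i * X ω i = c * ∑ i, α i * X ω i := by
      simp [Finset.mul_sum, mul_assoc]
    rw [hY, hpull, hpull]
    ring
  simp_rw [hres, integral_sq_linear_of_iIndepFun hX heps heta hX0 heps0 heta0 hind,
    mul_pow, Finset.mul_sum, mul_assoc, neg_sq]

end

namespace ProbabilityTheory.HasLaw

variable {Ω : Type*} {mΩ : MeasurableSpace Ω} {P : Measure Ω} {X : Ω → ℝ} {μ : ℝ} {v : ℝ≥0}

lemma integral_eq_of_gaussianReal (hX : HasLaw X (gaussianReal μ v) P) : P[X] = μ := by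
  rw [hX.integral_eq, integral_id_gaussianReal]

lemma variance_eq_of_gaussianReal (hX : HasLaw X (gaussianReal μ v) P) : Var[X; P] = v := by
  rw [hX.variance_eq, variance_id_gaussianReal]

end ProbabilityTheory.HasLaw

lemma integral_quadratic_of_integral_id_eq_zero {ν : Measure ℝ} [IsProbabilityMeasure ν]
    (hsq : Integrable (fun t => t ^ 2) ν) (hmean : ∫ t, t ∂ν = 0) (a b c : ℝ) :
    ∫ t, (a + b * t + c * t ^ 2) ∂ν = a + c * ∫ t, t ^ 2 ∂ν := by
  have hid : Integrable (fun t => t) ν :=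
    ((memLp_two_iff_integrable_sq aestronglyMeasurable_id).2 hsq).integrable one_le_two
  have hlin : Integrable (fun t => a + b * t) ν := (integrable_const a).add (hid.const_mul b)
  rw [integral_add hlin (hsq.const_mul c), integral_add (integrable_const a) (hid.const_mul b),
    integral_const_mul, integral_const_mul, hmean]
  simp

theorem stmt_9_general
    {s D : ℕ}
    {Ω : Type*} [MeasureSpace Ω] [IsProbabilityMeasure (ℙ : Measure Ω)]
    (α : Fin s → ℝ) (σ2 σeta2 : NNReal) (sX2 : Fin s → NNReal)
    -- test-task variables (the task parameter γ^T enters through `Z = t·Y + η`)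
    (XS : Ω → Fin s → ℝ) (eps eta : Ω → ℝ)
    (hXm : Measurable XS) (hepsm : Measurable eps) (hetam : Measurable eta)
    (hXgauss : ∀ i, Measure.map (fun ω => XS ω i) ℙ = gaussianReal 0 (sX2 i))
    (hepsgauss : Measure.map eps ℙ = gaussianReal 0 σ2)
    (hetagauss : Measure.map eta ℙ = gaussianReal 0 σeta2)
    (hindep : iIndepFun
      (Sum.elim (fun i (ω : Ω) => XS ω i)
        (fun b (ω : Ω) => if b then eps ω else eta ω) : (Fin s ⊕ Bool) → Ω → ℝ) ℙ)
    (Y : Ω → ℝ) (hY : Y = fun ω => (∑ i, α i * XS ω i) + eps ω)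
    -- model quantities and pooled least-squares coefficients
    (A VY gbar bZ : ℝ) (bS : Fin s → ℝ)
    (hA : A = ∑ i, α i ^ 2 * (sX2 i : ℝ))
    (hVY : VY = A + (σ2 : ℝ))
    (hbS : bS = fun i => (1 - gbar / (D : ℝ) * bZ) * α i)
    -- the law of the random test coefficient γ^T : mean zero, variance Σ² > 0
    (ν : Measure ℝ) [IsProbabilityMeasure ν] (Ssq : ℝ) (hSpos : 0 < Ssq)
    (hmean : ∫ t, t ∂ν = 0) (hvar : ∫ t, t ^ 2 ∂ν = Ssq)
    -- test risk of the pooled predictor as a function of γ^T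
    (risk : ℝ → ℝ)
    (hrisk : risk = fun t =>
      ∫ ω, (Y ω - (∑ i, bS i * XS ω i) - bZ * (t * Y ω + eta ω)) ^ 2 ∂ℙ) :
    (σ2 : ℝ) ≤ ∫ t, risk t ∂ν ∧
      (∫ t, risk t ∂ν) - (σ2 : ℝ) =
        bZ ^ 2 * (VY * Ssq + (σeta2 : ℝ)) + gbar ^ 2 / (D : ℝ) ^ 2 * bZ ^ 2 * A := by
  have hXlaw (i : Fin s) : HasLaw (fun ω => XS ω i) (gaussianReal 0 (sX2 i)) :=
    ⟨((measurable_pi_apply i).comp hXm).aemeasurable, hXgauss i⟩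
  have hepslaw : HasLaw eps (gaussianReal 0 σ2) := ⟨hepsm.aemeasurable, hepsgauss⟩
  have hetalaw : HasLaw eta (gaussianReal 0 σeta2) := ⟨hetam.aemeasurable, hetagauss⟩
  set k := gbar / D * bZ
  have hrisk_eq (t : ℝ) : risk t
      = (k - bZ * t) ^ 2 * A + (1 - bZ * t) ^ 2 * σ2 + bZ ^ 2 * σeta2 := by
    simp only [hrisk, hbS]
    rw [integral_sq_residual_eq (fun i => (hXlaw i).hasGaussianLaw.memLp_two)
      hepslaw.hasGaussianLaw.memLp_two hetalaw.hasGaussianLaw.memLp_two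
      (fun i => (hXlaw i).integral_eq_of_gaussianReal) hepslaw.integral_eq_of_gaussianReal
      hetalaw.integral_eq_of_gaussianReal hindep hY, hA, hepslaw.variance_eq_of_gaussianReal,
      hetalaw.variance_eq_of_gaussianReal]
    simp only [(hXlaw _).variance_eq_of_gaussianReal]
  have hsq : Integrable (fun t => t ^ 2) ν := .of_integral_ne_zero (hvar ▸ hSpos.ne')
  have hexpect : ∫ t, risk t ∂ν = k ^ 2 * A + σ2 + bZ ^ 2 * σeta2 + bZ ^ 2 * VY * Ssq := by
    have hquad (t : ℝ) : risk t = (k ^ 2 * A + σ2 + bZ ^ 2 * σeta2)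
        + (-2 * bZ * (k * A + σ2)) * t + bZ ^ 2 * VY * t ^ 2 := by
      rw [hrisk_eq, hVY]; ring
    simp_rw [hquad, integral_quadratic_of_integral_id_eq_zero hsq hmean, hvar]
  have hexcess : ∫ t, risk t ∂ν - σ2
      = bZ ^ 2 * (VY * Ssq + σeta2) + gbar ^ 2 / D ^ 2 * bZ ^ 2 * A := by
    rw [hexpect, ← div_pow]; ring
  refine ⟨sub_nonneg.1 ?_, hexcess⟩
  rw [hexcess, hVY, hA]
  positivity

/-- With the pooled least-squares coefficients `β^{CS}` computed from `D` training tasks with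
coefficients `γ^1, …, γ^D`, if the test coefficient `γ^T` has mean zero and variance `Σ² > 0`,
the expected (over `γ^T`) test error satisfies
`E[risk(β^{CS})] - σ² = (β_Z^{CS})² (V_Y Σ² + σ_η²) + (ḡ²/D²) (β_Z^{CS})² αᵗ diag(σ_X²) α ≥ 0`,
hence `E[risk(β^{CS})] ≥ σ²`, the test error of the invariant predictor `(α, 0)`. -/
theorem stmt_9
    {s D : ℕ} (hD : 0 < D)
    {Ω : Type*} [MeasureSpace Ω] [IsProbabilityMeasure (ℙ : Measure Ω)]
    (α : Fin s → ℝ) (σ2 σeta2 : NNReal) (sX2 : Fin s → NNReal) (γ : Fin D → ℝ)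
    -- test-task variables (the task parameter γ^T enters through `Z = t·Y + η`)
    (XS : Ω → Fin s → ℝ) (eps eta : Ω → ℝ)
    (hXm : Measurable XS) (hepsm : Measurable eps) (hetam : Measurable eta)
    (hXgauss : ∀ i, Measure.map (fun ω => XS ω i) ℙ = gaussianReal 0 (sX2 i))
    (hepsgauss : Measure.map eps ℙ = gaussianReal 0 σ2)
    (hetagauss : Measure.map eta ℙ = gaussianReal 0 σeta2)
    (hindep : iIndepFun
      (Sum.elim (fun i (ω : Ω) => XS ω i)
        (fun b (ω : Ω) => if b then eps ω else eta ω) : (Fin s ⊕ Bool) → Ω → ℝ) ℙ)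
    (Y : Ω → ℝ) (hY : Y = fun ω => (∑ i, α i * XS ω i) + eps ω)
    -- model quantities and pooled least-squares coefficients
    (A VY gbar g2bar bZ : ℝ) (bS : Fin s → ℝ)
    (hA : A = ∑ i, α i ^ 2 * (sX2 i : ℝ))
    (hVY : VY = A + (σ2 : ℝ))
    (hgbar : gbar = ∑ k, γ k) (hg2bar : g2bar = ∑ k, γ k ^ 2)
    (hbZ : bZ = gbar * (σ2 : ℝ) /
      (VY ^ 2 * g2bar + (D : ℝ) * (σeta2 : ℝ) - gbar ^ 2 / (D : ℝ) * A))
    (hbS : bS = fun i => (1 - gbar / (D : ℝ) * bZ) * α i)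
    -- the law of the random test coefficient γ^T : mean zero, variance Σ² > 0
    (ν : Measure ℝ) [IsProbabilityMeasure ν] (Ssq : ℝ) (hSpos : 0 < Ssq)
    (hmean : ∫ t, t ∂ν = 0) (hvar : ∫ t, t ^ 2 ∂ν = Ssq)
    -- test risk of the pooled predictor as a function of γ^T
    (risk : ℝ → ℝ)
    (hrisk : risk = fun t =>
      ∫ ω, (Y ω - (∑ i, bS i * XS ω i) - bZ * (t * Y ω + eta ω)) ^ 2 ∂ℙ) :
    (σ2 : ℝ) ≤ ∫ t, risk t ∂ν ∧
      (∫ t, risk t ∂ν) - (σ2 : ℝ) =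
        bZ ^ 2 * (VY * Ssq + (σeta2 : ℝ)) + gbar ^ 2 / (D : ℝ) ^ 2 * bZ ^ 2 * A :=
  stmt_9_general α σ2 σeta2 sX2 XS eps eta hXm hepsm hetam hXgauss hepsgauss hetagauss hindep Y hY A
    VY gbar bZ bS hA hVY hbS ν Ssq hSpos hmean hvar risk hrisk
end
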